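/- The Gaussian characteristic time T*_KL(ν) for an instance with unique best arm satisfies H(ν) ≤ T*_KL(ν) ≤ 2H(ν), where H(ν) = 2σ² Σ_{a ∈ [K]} Δ_a^{-2}, Δ_a = μ_{a*} - μ_a for a ≠ a*, and Δ_{a*} = min_{a ≠ a*}(μ_{a*} - μ_a). -/
import Mathlib


open scoped BigOperators

theorem lb_aux (d0 da u w S σ : ℝ) (hS : 0 < S) (h0 : 0 < d0) (hda : d0 ≤ da) (hσ : 0 < σ)
 (h : da ≤ u + w) : 1/(4*σ^2*S) ≤ (1/d0^2/S * u^2 + 1/da^2/S * w^2)/(2*σ^2) := by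
  have hda0 : 0 < da := lt_of_lt_of_le h0 hda
  rw [div_le_div_iff₀ (by positivity) (by positivity)]
  have h2 : da^2 ≤ (u+w)^2 := by nlinarith
  have h3 : (u^2*da^2+w^2*d0^2)*(d0^2+da^2) ≥ (u+w)^2*(d0^2*da^2) := by
    nlinarith [sq_nonneg (u*da^2 - w*d0^2)]
  have key : 2*(u^2*da^2 + w^2*d0^2) ≥ d0^2*da^2 := by
    have h4 : (u+w)^2*(d0^2*da^2) ≥ da^2*(d0^2*da^2) := by
      have := mul_pos (pow_pos h0 2) (pow_pos hda0 2)
      nlinarith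
    have Xnn : (0:ℝ) ≤ u^2*da^2+w^2*d0^2 := by positivity
    have hdd : d0^2 ≤ da^2 := by nlinarith
    have h5 : 2*da^2*(u^2*da^2+w^2*d0^2) ≥ (u^2*da^2+w^2*d0^2)*(d0^2+da^2) := by
      nlinarith [mul_nonneg Xnn (sub_nonneg.mpr hdd)]
    have h6 : 2*da^2*(u^2*da^2+w^2*d0^2) ≥ da^2*(d0^2*da^2) := le_trans (le_trans h4 h3) h5
    have hda2 : 0 < da^2 := pow_pos hda0 2
    nlinarith [h6]
  have e1 : 1/d0^2/S * u^2 + 1/da^2/S * w^2 = (u^2*da^2 + w^2*d0^2)/(S*(d0^2*da^2)) := by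
    field_simp
  rw [e1, div_mul_eq_mul_div, le_div_iff₀ (by positivity)]
  nlinarith [mul_le_mul_of_nonneg_left key (by positivity : (0:ℝ) ≤ 2*σ^2*S)]

theorem step2 (wa g d ε σ C : ℝ) (hσ : 0 < σ) (hwa : 0 ≤ wa) (hd : 0 < d) (hd1 : d ≤ 1)
    (hCge : wa*(2*g+1)/(2*σ^2) ≤ C) (hδε : d*C ≤ ε) :
    wa * ((g+d)^2/(2*σ^2)) ≤ wa*(g^2/(2*σ^2)) + ε := by
  have hnum : wa*(g+d)^2 ≤ wa*g^2 + d*(wa*(2*g+1)) := by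
    nlinarith [mul_nonneg (mul_nonneg hwa hd.le) (sub_nonneg.mpr hd1)]
  have h2 : wa*(g+d)^2/(2*σ^2) ≤ (wa*g^2 + d*(wa*(2*g+1)))/(2*σ^2) :=
    div_le_div_of_nonneg_right hnum (by positivity)
  have h3 : (wa*g^2 + d*(wa*(2*g+1)))/(2*σ^2)
      = wa*(g^2/(2*σ^2)) + d*(wa*(2*g+1)/(2*σ^2)) := by ring
  have h4 : d*(wa*(2*g+1)/(2*σ^2)) ≤ d*C := mul_le_mul_of_nonneg_left hCge hd.le
  have h5 : wa * ((g+d)^2/(2*σ^2)) = wa*(g+d)^2/(2*σ^2) := by ring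
  linarith

/-- Inverse Gaussian characteristic time
`T*_KL(ν)⁻¹ = sup_{ω ∈ Σ_K} inf_{λ ∈ Alt(ν)} Σ_a ω_a (μ_a - λ_a)²/(2σ²)`,
where `Alt(ν)` is the set of Gaussian instances whose best arm is not arm `0`. -/
noncomputable def gaussCharInv {K : ℕ} (σ : ℝ) (μ : Fin (K + 2) → ℝ) : ℝ :=
  ⨆ ω : {ω : Fin (K + 2) → ℝ // (∀ a, 0 ≤ ω a) ∧ ∑ a, ω a = 1},
    ⨅ lam : {l : Fin (K + 2) → ℝ // ∃ a, a ≠ 0 ∧ l 0 < l a},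
      ∑ a, ω.1 a * ((μ a - lam.1 a) ^ 2 / (2 * σ ^ 2))

/-- Gap of arm `a`: `Δ_a = μ_{a*} - μ_a` for `a ≠ a*`, and
`Δ_{a*} = Δ_min = min_{a ≠ a*} (μ_{a*} - μ_a)` (best arm `a* = 0`). -/
noncomputable def gapOf {K : ℕ} (μ : Fin (K + 2) → ℝ) (a : Fin (K + 2)) : ℝ :=
  if a = 0 then ⨅ b : {b : Fin (K + 2) // b ≠ 0}, (μ 0 - μ b.1) else μ 0 - μ a

/-- Complexity term `H(ν) = 2σ² Σ_a Δ_a⁻²`. -/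
noncomputable def Hcomplexity {K : ℕ} (σ : ℝ) (μ : Fin (K + 2) → ℝ) : ℝ :=
  2 * σ ^ 2 * ∑ a, 1 / gapOf μ a ^ 2

/-- The Gaussian characteristic time satisfies `H(ν) ≤ T*_KL(ν) ≤ 2 H(ν)`. -/
theorem gauss_char_time_H_bounds {K : ℕ} (σ : ℝ) (hσ : 0 < σ)
    (μ : Fin (K + 2) → ℝ) (hbest : ∀ a, a ≠ 0 → μ a < μ 0) :
    Hcomplexity σ μ ≤ (gaussCharInv σ μ)⁻¹ ∧
      (gaussCharInv σ μ)⁻¹ ≤ 2 * Hcomplexity σ μ := by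
  classical
  have hinv : (0:ℝ) < (2*σ^2)⁻¹ := by positivity
  have h1ne0 : (1 : Fin (K+2)) ≠ 0 := by simp [Fin.ext_iff]
  haveI : Nonempty {b : Fin (K + 2) // b ≠ 0} := ⟨⟨1, h1ne0⟩⟩
  obtain ⟨a', ha'min⟩ := Finite.exists_min (fun b : {b : Fin (K+2) // b ≠ 0} => μ 0 - μ b.1)
  have hgap0 : gapOf μ 0 = μ 0 - μ a'.1 := by
    rw [gapOf, if_pos rfl]
    exact le_antisymm (ciInf_le (Finite.bddBelow_range _) a') (le_ciInf ha'min)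
  have hgapne : ∀ a : Fin (K+2), a ≠ 0 → gapOf μ a = μ 0 - μ a := by
    intro a ha; rw [gapOf, if_neg ha]
  have hgap0pos : 0 < gapOf μ 0 := by rw [hgap0]; linarith [hbest a'.1 a'.2]
  have hgappos : ∀ a, 0 < gapOf μ a := by
    intro a
    by_cases h : a = 0
    · subst h; exact hgap0pos
    · rw [hgapne a h]; linarith [hbest a h]
  have hgap0le : ∀ a : Fin (K+2), a ≠ 0 → gapOf μ 0 ≤ gapOf μ a := by
    intro a ha
    rw [hgapne a ha, hgap0]; exact ha'min ⟨a, ha⟩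
  set S := ∑ a, 1 / gapOf μ a ^ 2 with hSdef
  have hSpos : 0 < S := Finset.sum_pos (fun a _ => by have := hgappos a; positivity)
    ⟨0, Finset.mem_univ 0⟩
  haveI hAltNe : Nonempty {l : Fin (K + 2) → ℝ // ∃ a, a ≠ 0 ∧ l 0 < l a} := by
    refine ⟨⟨fun b => if b = 1 then 1 else 0, 1, h1ne0, ?_⟩⟩
    have h01 : (0 : Fin (K+2)) ≠ 1 := Ne.symm h1ne0
    simp [h01]
  haveI hSimpNe : Nonempty {ω : Fin (K + 2) → ℝ // (∀ a, 0 ≤ ω a) ∧ ∑ a, ω a = 1} := by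
    refine ⟨⟨fun _ => ((K:ℝ)+2)⁻¹, fun a => by positivity, ?_⟩⟩
    rw [Finset.sum_const, Finset.card_univ, Fintype.card_fin, nsmul_eq_mul]
    push_cast
    rw [mul_inv_cancel₀ (by positivity)]
  have hbdd : ∀ ω : {ω : Fin (K + 2) → ℝ // (∀ a, 0 ≤ ω a) ∧ ∑ a, ω a = 1},
      BddBelow (Set.range (fun lam : {l : Fin (K + 2) → ℝ // ∃ a, a ≠ 0 ∧ l 0 < l a} =>
        ∑ a, ω.1 a * ((μ a - lam.1 a) ^ 2 / (2 * σ ^ 2)))) := by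
    intro ω
    refine ⟨0, ?_⟩
    rintro x ⟨lam, rfl⟩
    exact Finset.sum_nonneg fun a _ => mul_nonneg (ω.2.1 a) (by positivity)
  -- key upper bound on the inner infimum
  have key_ub : ∀ ω : {ω : Fin (K + 2) → ℝ // (∀ a, 0 ≤ ω a) ∧ ∑ a, ω a = 1},
      ∀ a : Fin (K+2),
      (⨅ lam : {l : Fin (K + 2) → ℝ // ∃ a, a ≠ 0 ∧ l 0 < l a},
        ∑ b, ω.1 b * ((μ b - lam.1 b) ^ 2 / (2 * σ ^ 2)))
        ≤ ω.1 a * gapOf μ a ^ 2 / (2 * σ ^ 2) := by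
    intro ω a
    apply le_of_forall_pos_le_add
    intro ε hε
    by_cases hA : a = 0
    · subst hA
      set C : ℝ := ω.1 a'.1 / (2*σ^2) + 1 with hC
      have hωa' : 0 ≤ ω.1 a'.1 := ω.2.1 a'.1
      have hCpos : 0 < C := by positivity
      set δ := min 1 (ε / C) with hδdef
      have hδpos : 0 < δ := lt_min one_pos (div_pos hε hCpos)
      have hδ1 : δ ≤ 1 := min_le_left _ _
      have hδε : δ * C ≤ ε := by
        calc min 1 (ε/C) * C ≤ (ε/C)*C :=
              mul_le_mul_of_nonneg_right (min_le_right _ _) hCpos.le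
          _ = ε := div_mul_cancel₀ _ hCpos.ne'
      set l : Fin (K+2) → ℝ := Function.update (Function.update μ 0 (μ a'.1)) a'.1 (μ a'.1 + δ)
        with hl
      have hl0 : l 0 = μ a'.1 := by
        rw [hl, Function.update_of_ne (Ne.symm a'.2), Function.update_self]
      have hla' : l a'.1 = μ a'.1 + δ := by rw [hl, Function.update_self]
      have hlother : ∀ b : Fin (K+2), b ≠ 0 → b ≠ a'.1 → l b = μ b := by
        intro b hb0 hba
        rw [hl, Function.update_of_ne hba, Function.update_of_ne hb0]
      refine le_trans (ciInf_le (hbdd ω) ⟨l, a'.1, a'.2, by rw [hl0, hla']; linarith⟩) ?_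
      have hsum : ∑ b, ω.1 b * ((μ b - l b) ^ 2 / (2 * σ ^ 2))
          = ω.1 0 * ((μ 0 - μ a'.1)^2 / (2*σ^2)) + ω.1 a'.1 * (δ^2 / (2*σ^2)) := by
        rw [Finset.sum_eq_add (0 : Fin (K+2)) a'.1 (Ne.symm a'.2)
          (fun b _ hb => by rw [hlother b hb.1 hb.2]; simp)
          (by simp) (by simp), hl0, hla']
        ring_nf
      rw [hsum, hgap0]
      have hCge : ω.1 a'.1*(2*(0:ℝ)+1)/(2*σ^2) ≤ C := by
        rw [hC]
        have e : ω.1 a'.1*(2*(0:ℝ)+1)/(2*σ^2) = ω.1 a'.1/(2*σ^2) := by ring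
        linarith
      have hstep := step2 (ω.1 a'.1) 0 δ ε σ C hσ hωa' hδpos hδ1 hCge hδε
      ring_nf at hstep ⊢
      linarith [hstep]
    · -- a ≠ 0
      set C : ℝ := ω.1 a * (2*(μ 0 - μ a)+1) / (2*σ^2) + 1 with hC
      have hωa : 0 ≤ ω.1 a := ω.2.1 a
      have hμa : μ a < μ 0 := hbest a hA
      have hCpos : 0 < C := by
        have h9 : 0 ≤ ω.1 a * (2*(μ 0 - μ a)+1) / (2*σ^2) := by
          apply div_nonneg _ (by positivity)
          apply mul_nonneg hωa
          linarith
        rw [hC]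
        linarith [h9]
      set δ := min 1 (ε / C) with hδdef
      have hδpos : 0 < δ := lt_min one_pos (div_pos hε hCpos)
      have hδ1 : δ ≤ 1 := min_le_left _ _
      have hδε : δ * C ≤ ε := by
        calc min 1 (ε/C) * C ≤ (ε/C)*C :=
              mul_le_mul_of_nonneg_right (min_le_right _ _) hCpos.le
          _ = ε := div_mul_cancel₀ _ hCpos.ne'
      set l : Fin (K+2) → ℝ := Function.update μ a (μ 0 + δ) with hl
      have hl0 : l 0 = μ 0 := by rw [hl, Function.update_of_ne (Ne.symm hA)]
      have hla : l a = μ 0 + δ := by rw [hl, Function.update_self]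
      refine le_trans (ciInf_le (hbdd ω) ⟨l, a, hA, by rw [hl0, hla]; linarith⟩) ?_
      have hsum : ∑ b, ω.1 b * ((μ b - l b) ^ 2 / (2 * σ ^ 2))
          = ω.1 a * ((μ a - (μ 0 + δ))^2 / (2*σ^2)) := by
        rw [Finset.sum_eq_single a]
        · rw [hla]
        · intro b _ hb; rw [hl, Function.update_of_ne hb]; simp
        · simp
      rw [hsum, hgapne a hA]
      have hCge : ω.1 a*(2*(μ 0 - μ a)+1)/(2*σ^2) ≤ C := by rw [hC]; linarith
      have hstep := step2 (ω.1 a) (μ 0 - μ a) δ ε σ C hσ hωa hδpos hδ1 hCge hδε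
      ring_nf at hstep ⊢
      linarith [hstep]
  -- upper bound on the infimum : inf ≤ 1/(2σ²S)
  have hub : ∀ ω : {ω : Fin (K + 2) → ℝ // (∀ a, 0 ≤ ω a) ∧ ∑ a, ω a = 1},
      (⨅ lam : {l : Fin (K + 2) → ℝ // ∃ a, a ≠ 0 ∧ l 0 < l a},
        ∑ b, ω.1 b * ((μ b - lam.1 b) ^ 2 / (2 * σ ^ 2))) ≤ 1/(2*σ^2*S) := by
    intro ω
    set v := ⨅ lam : {l : Fin (K + 2) → ℝ // ∃ a, a ≠ 0 ∧ l 0 < l a},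
        ∑ b, ω.1 b * ((μ b - lam.1 b) ^ 2 / (2 * σ ^ 2)) with hv
    have hterm : ∀ a : Fin (K+2), 2*σ^2*v * (1/gapOf μ a^2) ≤ ω.1 a := by
      intro a
      have h := key_ub ω a
      have hg := hgappos a
      rw [le_div_iff₀ (by positivity)] at h
      rw [mul_one_div, div_le_iff₀ (by positivity)]
      nlinarith [h]
    have hsum1 : ∑ a, 2*σ^2*v * (1/gapOf μ a^2) ≤ 1 := by
      calc ∑ a, 2*σ^2*v * (1/gapOf μ a^2) ≤ ∑ a, ω.1 a :=
            Finset.sum_le_sum fun a _ => hterm a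
        _ = 1 := ω.2.2
    have h2 : 2*σ^2*v*S ≤ 1 := by
      have e : 2*σ^2*v*S = ∑ a, 2*σ^2*v * (1/gapOf μ a^2) := by
        rw [hSdef, Finset.mul_sum]
      rw [e]
      exact hsum1
    rw [le_div_iff₀ (by positivity)]
    nlinarith [h2]
  -- the maximin witness
  have hωstar_sum : ∑ a, 1/gapOf μ a^2/S = 1 := by
    rw [← Finset.sum_div, ← hSdef, div_self hSpos.ne']
  set ωstar : {ω : Fin (K + 2) → ℝ // (∀ a, 0 ≤ ω a) ∧ ∑ a, ω a = 1} :=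
    ⟨fun a => 1/gapOf μ a^2/S, fun a => by have := hgappos a; positivity, hωstar_sum⟩
    with hωstar
  have klb : ∀ lam : {l : Fin (K + 2) → ℝ // ∃ a, a ≠ 0 ∧ l 0 < l a},
      1/(4*σ^2*S) ≤ ∑ b, ωstar.1 b * ((μ b - lam.1 b) ^ 2 / (2 * σ ^ 2)) := by
    rintro ⟨l, a, ha, hla⟩
    have h0a : (0 : Fin (K+2)) ≠ a := Ne.symm ha
    have hpair : ωstar.1 0 * ((μ 0 - l 0) ^ 2 / (2 * σ ^ 2))
        + ωstar.1 a * ((μ a - l a) ^ 2 / (2 * σ ^ 2))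
        ≤ ∑ b, ωstar.1 b * ((μ b - l b) ^ 2 / (2 * σ ^ 2)) := by
      have hsub : ∑ b ∈ ({0, a} : Finset (Fin (K+2))),
            ωstar.1 b * ((μ b - l b) ^ 2 / (2 * σ ^ 2))
          ≤ ∑ b, ωstar.1 b * ((μ b - l b) ^ 2 / (2 * σ ^ 2)) := by
        apply Finset.sum_le_sum_of_subset_of_nonneg (Finset.subset_univ _)
        intro b _ _
        exact mul_nonneg (ωstar.2.1 b) (by positivity)
      rwa [Finset.sum_pair h0a] at hsub
    refine le_trans ?_ hpair
    have hcs := lb_aux (gapOf μ 0) (gapOf μ a) (μ 0 - l 0) (l a - μ a) S σ hSpos hgap0pos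
      (hgap0le a ha) hσ (by rw [hgapne a ha]; linarith)
    calc 1/(4*σ^2*S)
        ≤ (1/gapOf μ 0^2/S * (μ 0 - l 0)^2 + 1/gapOf μ a^2/S * (l a - μ a)^2)/(2*σ^2) := hcs
      _ = ωstar.1 0 * ((μ 0 - l 0) ^ 2 / (2 * σ ^ 2))
          + ωstar.1 a * ((μ a - l a) ^ 2 / (2 * σ ^ 2)) := by
          rw [hωstar]; ring
  -- assemble
  have hbddAbove : BddAbove (Set.range (fun ω : {ω : Fin (K + 2) → ℝ // (∀ a, 0 ≤ ω a) ∧ ∑ a, ω a = 1} =>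
      ⨅ lam : {l : Fin (K + 2) → ℝ // ∃ a, a ≠ 0 ∧ l 0 < l a},
        ∑ b, ω.1 b * ((μ b - lam.1 b) ^ 2 / (2 * σ ^ 2)))) := by
    refine ⟨1/(2*σ^2*S), ?_⟩
    rintro x ⟨ω, rfl⟩
    exact hub ω
  have hsup_le : gaussCharInv σ μ ≤ 1/(2*σ^2*S) := ciSup_le hub
  have hsup_ge : 1/(4*σ^2*S) ≤ gaussCharInv σ μ :=
    le_trans (le_ciInf klb) (le_ciSup hbddAbove ωstar)
  have hGpos : 0 < gaussCharInv σ μ := lt_of_lt_of_le (by positivity) hsup_ge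
  have hH : Hcomplexity σ μ = 2*σ^2*S := by rw [Hcomplexity, hSdef]
  constructor
  · rw [hH]
    have h := inv_anti₀ hGpos hsup_le
    rwa [one_div, inv_inv] at h
  · rw [hH]
    have h := inv_anti₀ (by positivity : (0:ℝ) < 1/(4*σ^2*S)) hsup_ge
    rw [one_div, inv_inv] at h
    linarith
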